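/- arXiv:1805.09095 — 2 statements merged into one kernel-verified Lean document; each statement's English description precedes it below -/
import Mathlib

section
/- Let q : 𝔻 → ℂ be holomorphic and set μ(z) = ((1-|z|²)²/4) · conj(q(z)). If ‖μ‖²_WP := ∫_𝔻 |μ(z)|² dA(z) < ∞, then sup_{z ∈ 𝔻} |μ(z)| ≤ √(3/(4π)) · ‖μ‖_WP. -/
/-!
Let `w ∈ 𝔻` and `φ(u) = (u + w) / (1 + w̄ u)`, so that `φ(0) = w`. The hyperbolic density
satisfies `ρ(φ u) |φ'(u)|² = ρ(u)`, so the change of variables `z = φ u` shows that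
`∫_𝔻 |q|² / ρ` is unchanged when `q` is replaced by the pulled-back quadratic differential
`g = (q ∘ φ) φ'²`. For holomorphic `g`, `|g(0)|²` is at most the mean of `|g|²` over every circle
`|u| = r`; integrating this in polar coordinates against `r (1 - r²)² / 4 dr` gives
`∫_𝔻 |g|² / ρ ≥ (π / 12) |g(0)|²`. Finally `|μ|² ρ = |q|² / ρ` and
`|g(0)| = (1 - |w|²)² |q(w)| = 4 |μ(w)|`, whence `‖μ‖²_WP ≥ (4π / 3) |μ(w)|²`.
-/

open MeasureTheory Complex

/-- The hyperbolic metric density `ρ(z) = 4/(1-|z|²)²` on the unit disk. -/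
noncomputable def rho (z : ℂ) : ℝ := 4 / (1 - ‖z‖ ^ 2) ^ 2

open Metric Set Real ComplexConjugate
open scoped ENNReal

lemma rho_nonneg (z : ℂ) : 0 ≤ rho z := by
  unfold rho; positivity

lemma rho_pos {z : ℂ} (hz : ‖z‖ < 1) : 0 < rho z := by
  have : 0 < 1 - ‖z‖ ^ 2 := by nlinarith [norm_nonneg z]
  unfold rho; positivity

lemma continuousOn_rho : ContinuousOn rho (ball 0 1) := fun z hz => by
  have : (1 - ‖z‖ ^ 2) ^ 2 ≠ 0 := by
    have : 0 < 1 - ‖z‖ ^ 2 := by nlinarith [mem_ball_zero_iff.mp hz, norm_nonneg z]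
    positivity
  unfold rho
  exact ContinuousAt.continuousWithinAt (by fun_prop (disch := exact this))

lemma det_smulRight_restrictScalars (c : ℂ) :
    ((ContinuousLinearMap.smulRight (1 : ℂ →L[ℂ] ℂ) c).restrictScalars ℝ).det = ‖c‖ ^ 2 := by
  simp [ContinuousLinearMap.det, LinearMap.det_restrictScalars, Algebra.norm_complex_eq,
    Complex.normSq_eq_norm_sq]

noncomputable def diskMobius (w u : ℂ) : ℂ := (u + w) / (1 + conj w * u)

noncomputable def diskMobiusDeriv (w u : ℂ) : ℂ := (1 - ‖w‖ ^ 2 : ℝ) / (1 + conj w * u) ^ 2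

noncomputable def diskMobiusPullback (w : ℂ) (q : ℂ → ℂ) (u : ℂ) : ℂ :=
  q (diskMobius w u) * diskMobiusDeriv w u ^ 2

section DiskMobius

variable {w u : ℂ}

lemma one_add_conj_mul_ne_zero (hw : ‖w‖ < 1) (hu : ‖u‖ < 1) : 1 + conj w * u ≠ 0 := by
  intro h
  have : ‖conj w * u‖ = 1 := by rw [eq_neg_of_add_eq_zero_right h, norm_neg, norm_one]
  rw [norm_mul, RCLike.norm_conj] at this
  nlinarith [norm_nonneg u, norm_nonneg w]

lemma hasDerivAt_diskMobius (h : 1 + conj w * u ≠ 0) :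
    HasDerivAt (diskMobius w) (diskMobiusDeriv w u) u := by
  refine (((hasDerivAt_id u).add_const w).div
    (((hasDerivAt_id u).const_mul (conj w)).const_add 1) h).congr_deriv ?_
  rw [diskMobiusDeriv, Complex.ofReal_sub, Complex.ofReal_pow, ← Complex.conj_mul']
  simp only [id, mul_one, Complex.ofReal_one]
  ring

lemma norm_diskMobiusDeriv (hw : ‖w‖ < 1) :
    ‖diskMobiusDeriv w u‖ = (1 - ‖w‖ ^ 2) / ‖1 + conj w * u‖ ^ 2 := by
  rw [diskMobiusDeriv, norm_div, norm_pow, Complex.norm_real, Real.norm_of_nonneg]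
  nlinarith [norm_nonneg w]

lemma diskMobiusDeriv_ne_zero (hw : ‖w‖ < 1) (hu : ‖u‖ < 1) : diskMobiusDeriv w u ≠ 0 := by
  rw [← norm_ne_zero_iff, norm_diskMobiusDeriv hw]
  have := one_add_conj_mul_ne_zero hw hu
  have : 0 < 1 - ‖w‖ ^ 2 := by nlinarith [norm_nonneg w]
  positivity

lemma one_sub_sq_norm_diskMobius (hw : ‖w‖ < 1) (h : 1 + conj w * u ≠ 0) :
    1 - ‖diskMobius w u‖ ^ 2 = (1 - ‖u‖ ^ 2) * ‖diskMobiusDeriv w u‖ := by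
  have key : ‖1 + conj w * u‖ ^ 2 - ‖u + w‖ ^ 2 = (1 - ‖u‖ ^ 2) * (1 - ‖w‖ ^ 2) := by
    simp only [Complex.sq_norm, Complex.normSq_apply, Complex.add_re, Complex.add_im,
      Complex.mul_re, Complex.mul_im, Complex.one_re, Complex.one_im, Complex.conj_re,
      Complex.conj_im]
    ring
  have hD : ‖1 + conj w * u‖ ^ 2 ≠ 0 := pow_ne_zero 2 (norm_ne_zero_iff.mpr h)
  rw [norm_diskMobiusDeriv hw, diskMobius, norm_div, div_pow, mul_div_assoc', ← key, sub_div,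
    div_self hD]

lemma norm_diskMobius_lt_one (hw : ‖w‖ < 1) (hu : ‖u‖ < 1) : ‖diskMobius w u‖ < 1 := by
  have h := one_sub_sq_norm_diskMobius hw (one_add_conj_mul_ne_zero hw hu)
  have : 0 < (1 - ‖u‖ ^ 2) * ‖diskMobiusDeriv w u‖ :=
    mul_pos (by nlinarith [norm_nonneg u]) (norm_pos_iff.mpr (diskMobiusDeriv_ne_zero hw hu))
  nlinarith [norm_nonneg (diskMobius w u)]

lemma diskMobius_diskMobius_neg (hw : ‖w‖ < 1) (hu : ‖u‖ < 1) :
    diskMobius w (diskMobius (-w) u) = u := by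
  have h₁ : 1 - conj w * u ≠ 0 := by
    simpa [sub_eq_add_neg] using one_add_conj_mul_ne_zero (w := -w) (by simpa using hw) hu
  have h₂ : (1 - ‖w‖ ^ 2 : ℂ) ≠ 0 := by
    rw [← Complex.ofReal_one, ← Complex.ofReal_pow, ← Complex.ofReal_sub, Complex.ofReal_ne_zero]
    nlinarith [norm_nonneg w]
  have hww : conj w * w = ‖w‖ ^ 2 := Complex.conj_mul' w
  have h₃ : 1 - conj w * u + conj w * (u - w) ≠ 0 := by
    rw [show 1 - conj w * u + conj w * (u - w) = 1 - conj w * w by ring, hww]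
    exact h₂
  simp only [diskMobius, map_neg, neg_mul, ← sub_eq_add_neg]
  rw [div_add' _ _ _ h₁, mul_div_assoc', one_add_div h₁, div_div_div_cancel_right₀ h₁,
    div_eq_iff h₃]
  ring

lemma bijOn_diskMobius (hw : ‖w‖ < 1) : BijOn (diskMobius w) (ball 0 1) (ball 0 1) := by
  have hw' : ‖-w‖ < 1 := by rwa [norm_neg]
  refine InvOn.bijOn (f' := diskMobius (-w)) ⟨fun u hu => ?_, fun z hz => ?_⟩
    (fun u hu => ?_) (fun z hz => ?_)
  · simpa using diskMobius_diskMobius_neg hw' (mem_ball_zero_iff.mp hu)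
  · exact diskMobius_diskMobius_neg hw (mem_ball_zero_iff.mp hz)
  · exact mem_ball_zero_iff.mpr (norm_diskMobius_lt_one hw (mem_ball_zero_iff.mp hu))
  · exact mem_ball_zero_iff.mpr (norm_diskMobius_lt_one hw' (mem_ball_zero_iff.mp hz))

lemma rho_diskMobius_mul (hw : ‖w‖ < 1) (hu : ‖u‖ < 1) :
    rho (diskMobius w u) * ‖diskMobiusDeriv w u‖ ^ 2 = rho u := by
  have hD : ‖diskMobiusDeriv w u‖ ≠ 0 := norm_ne_zero_iff.mpr (diskMobiusDeriv_ne_zero hw hu)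
  rw [rho, rho, one_sub_sq_norm_diskMobius hw (one_add_conj_mul_ne_zero hw hu)]
  field_simp

lemma lintegral_ball_comp_diskMobius (hw : ‖w‖ < 1) (f : ℂ → ℝ≥0∞) :
    ∫⁻ z in ball 0 1, f z =
      ∫⁻ u in ball 0 1, ENNReal.ofReal (‖diskMobiusDeriv w u‖ ^ 2) * f (diskMobius w u) := by
  have hbij := bijOn_diskMobius hw
  have hderiv (u : ℂ) (hu : u ∈ ball (0 : ℂ) 1) :
      HasFDerivWithinAt (diskMobius w)
        ((ContinuousLinearMap.smulRight (1 : ℂ →L[ℂ] ℂ) (diskMobiusDeriv w u)).restrictScalars ℝ)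
        (ball 0 1) u :=
    ((hasDerivAt_diskMobius (one_add_conj_mul_ne_zero hw (mem_ball_zero_iff.mp hu))
      ).hasFDerivAt.restrictScalars ℝ).hasFDerivWithinAt
  conv_lhs => rw [← hbij.image_eq]
  simp only [lintegral_image_eq_lintegral_abs_det_fderiv_mul volume measurableSet_ball hderiv
    hbij.injOn, det_smulRight_restrictScalars, abs_sq]

lemma lintegral_sq_norm_div_rho_diskMobiusPullback (hw : ‖w‖ < 1) (q : ℂ → ℂ) :
    ∫⁻ z in ball 0 1, ENNReal.ofReal (‖q z‖ ^ 2 / rho z) =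
      ∫⁻ u in ball 0 1, ENNReal.ofReal (‖diskMobiusPullback w q u‖ ^ 2 / rho u) := by
  rw [lintegral_ball_comp_diskMobius hw]
  refine setLIntegral_congr_fun measurableSet_ball fun u hu => ?_
  have hu : ‖u‖ < 1 := mem_ball_zero_iff.mp hu
  have hD : ‖diskMobiusDeriv w u‖ ≠ 0 := norm_ne_zero_iff.mpr (diskMobiusDeriv_ne_zero hw hu)
  rw [← ENNReal.ofReal_mul (sq_nonneg _), ← rho_diskMobius_mul hw hu, diskMobiusPullback,
    norm_mul, norm_pow]
  congr 1
  field_simp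

lemma differentiableOn_diskMobiusPullback (hw : ‖w‖ < 1) {q : ℂ → ℂ}
    (hq : DifferentiableOn ℂ q (ball 0 1)) :
    DifferentiableOn ℂ (diskMobiusPullback w q) (ball 0 1) := by
  have hden (u : ℂ) (hu : u ∈ ball (0 : ℂ) 1) : 1 + conj w * u ≠ 0 :=
    one_add_conj_mul_ne_zero hw (mem_ball_zero_iff.mp hu)
  refine (hq.comp (fun u hu => ?_) (bijOn_diskMobius hw).mapsTo).mul fun u hu => ?_
  · exact (hasDerivAt_diskMobius (hden u hu)).differentiableAt.differentiableWithinAt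
  · unfold diskMobiusDeriv
    exact (DifferentiableAt.pow (by fun_prop (disch := exact pow_ne_zero 2 (hden u hu))) 2
      ).differentiableWithinAt

lemma diskMobiusPullback_zero (q : ℂ → ℂ) :
    diskMobiusPullback w q 0 = ((1 - ‖w‖ ^ 2) ^ 2 : ℝ) * q w := by
  simp [diskMobiusPullback, diskMobius, diskMobiusDeriv, mul_comm]

end DiskMobius

lemma ofReal_intervalIntegral_eq_setLIntegral_Ioo {f : ℝ → ℝ} {a b : ℝ} (hab : a ≤ b)
    (hf : ContinuousOn f (Icc a b)) (hf₀ : ∀ x ∈ Ioo a b, 0 ≤ f x) :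
    ENNReal.ofReal (∫ x in a..b, f x) = ∫⁻ x in Ioo a b, ENNReal.ofReal (f x) := by
  rw [intervalIntegral.integral_of_le hab, integral_Ioc_eq_integral_Ioo,
    ofReal_integral_eq_lintegral_ofReal ((hf.integrableOn_Icc).mono_set Ioo_subset_Icc_self)
      ((ae_restrict_iff' measurableSet_Ioo).mpr (Filter.Eventually.of_forall hf₀))]

lemma integral_mul_one_sub_sq_sq_div_four :
    ∫ r in (0 : ℝ)..1, r * (1 - r ^ 2) ^ 2 / 4 = 1 / 24 := by
  have h (r : ℝ) (_ : r ∈ uIcc (0 : ℝ) 1) :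
      HasDerivAt (fun r : ℝ => (r ^ 2 - 1) ^ 3 / 24) (r * (1 - r ^ 2) ^ 2 / 4) r :=
    ((((hasDerivAt_pow 2 r).sub_const 1).fun_pow 3).div_const 24).congr_deriv (by push_cast; ring)
  rw [intervalIntegral.integral_eq_sub_of_hasDerivAt h
    (Continuous.intervalIntegrable (by fun_prop) _ _)]
  norm_num

lemma sq_norm_le_circleAverage {g : ℂ → ℂ} {c : ℂ} {R : ℝ} (hg : DiffContOnCl ℂ g (ball c |R|)) :
    ‖g c‖ ^ 2 ≤ circleAverage (fun z => ‖g z‖ ^ 2) c R := by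
  calc ‖g c‖ ^ 2 = ‖circleAverage (fun z => g z ^ 2) c R‖ := by
        rw [show (fun z => g z ^ 2) = (· ^ 2) ∘ g from rfl,
          ((differentiable_pow 2).comp_diffContOnCl hg).circleAverage, Function.comp_apply,
          norm_pow]
    _ ≤ (2 * π)⁻¹ * ∫ θ in 0..2 * π, ‖g (circleMap c R θ) ^ 2‖ := by
        rw [circleAverage_def, norm_smul, Real.norm_of_nonneg (by positivity)]
        gcongr
        exact intervalIntegral.norm_integral_le_integral_norm two_pi_pos.le
    _ = circleAverage (fun z => ‖g z‖ ^ 2) c R := by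
        simp only [circleAverage_def, norm_pow, smul_eq_mul]

lemma ofReal_two_pi_mul_sq_norm_le_setLIntegral {g : ℂ → ℂ} {c : ℂ} {R : ℝ}
    (hg : DifferentiableOn ℂ g (closedBall c |R|)) :
    ENNReal.ofReal (2 * π * ‖g c‖ ^ 2) ≤
      ∫⁻ θ in Ioo (-π) π, ENNReal.ofReal (‖g (circleMap c R θ)‖ ^ 2) := by
  have hper : Function.Periodic (fun θ => ‖g (circleMap c R θ)‖ ^ 2) (2 * π) :=
    (periodic_circleMap c R).comp fun z => ‖g z‖ ^ 2
  have hcont : Continuous fun θ => ‖g (circleMap c R θ)‖ ^ 2 :=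
    ((hg.continuousOn.comp_continuous (continuous_circleMap c R)
      (fun θ => sphere_subset_closedBall (circleMap_mem_sphere' c R θ))).norm.pow 2)
  calc ENNReal.ofReal (2 * π * ‖g c‖ ^ 2)
      ≤ ENNReal.ofReal (2 * π * circleAverage (fun z => ‖g z‖ ^ 2) c R) := by
        gcongr
        exact sq_norm_le_circleAverage (hg.mono closure_ball_subset_closedBall).diffContOnCl
    _ = ENNReal.ofReal (∫ θ in -π..π, ‖g (circleMap c R θ)‖ ^ 2) := by
        rw [circleAverage_def, smul_eq_mul, mul_inv_cancel_left₀ two_pi_pos.ne',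
          ← zero_add (2 * π), hper.intervalIntegral_add_eq 0 (-π)]
        ring_nf
    _ = _ := ofReal_intervalIntegral_eq_setLIntegral_Ioo (by linarith [pi_pos])
        hcont.continuousOn fun θ _ => sq_nonneg _

lemma polarCoord_symm_eq_circleMap (r θ : ℝ) :
    Complex.polarCoord.symm (r, θ) = circleMap 0 r θ := by
  simp [circleMap, Complex.exp_mul_I, ← Complex.ofReal_cos, ← Complex.ofReal_sin]

lemma lintegral_polar_le_lintegral_ball {f : ℂ → ℝ≥0∞} (hf : ContinuousOn f (ball 0 1)) :
    ∫⁻ r in Ioo 0 1, ∫⁻ θ in Ioo (-π) π, ENNReal.ofReal r * f (circleMap 0 r θ) ≤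
      ∫⁻ z in ball 0 1, f z := by
  set S : Set (ℝ × ℝ) := Ioo 0 1 ×ˢ Ioo (-π) π
  have hS : MeasurableSet S := measurableSet_Ioo.prod measurableSet_Ioo
  have hS_target : S ⊆ polarCoord.target := by
    rw [polarCoord_target]; exact prod_mono Ioo_subset_Ioi_self subset_rfl
  have hmaps : MapsTo Complex.polarCoord.symm S (ball 0 1) := fun p hp => by
    rw [mem_ball_zero_iff, Complex.norm_polarCoord_symm, abs_of_pos hp.1.1]
    exact hp.1.2
  have hmeas : AEMeasurable (fun p : ℝ × ℝ => ENNReal.ofReal p.1 * f (Complex.polarCoord.symm p))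
      (volume.restrict S) :=
    measurable_fst.ennreal_ofReal.aemeasurable.mul
      ((hf.comp (Complex.polarCoord.continuousOn_symm.mono hS_target) hmaps).aemeasurable hS)
  calc ∫⁻ r in Ioo 0 1, ∫⁻ θ in Ioo (-π) π, ENNReal.ofReal r * f (circleMap 0 r θ)
      = ∫⁻ p in S, ENNReal.ofReal p.1 * f (Complex.polarCoord.symm p) := by
        rw [Measure.volume_eq_prod, setLIntegral_prod _ (by rwa [← Measure.volume_eq_prod])]
        simp only [polarCoord_symm_eq_circleMap]
    _ = ∫⁻ p in S, ENNReal.ofReal p.1 • (ball 0 1).indicator f (Complex.polarCoord.symm p) :=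
        setLIntegral_congr_fun hS fun p hp => by rw [indicator_of_mem (hmaps hp), smul_eq_mul]
    _ ≤ ∫⁻ p in polarCoord.target,
          ENNReal.ofReal p.1 • (ball 0 1).indicator f (Complex.polarCoord.symm p) :=
        lintegral_mono_set hS_target
    _ = ∫⁻ z in ball 0 1, f z := by
        rw [Complex.lintegral_comp_polarCoord_symm, lintegral_indicator measurableSet_ball]

lemma ofReal_weighted_sq_norm_le_lintegral_circle {g : ℂ → ℂ}
    (hg : DifferentiableOn ℂ g (ball 0 1)) {r : ℝ} (hr₀ : 0 < r) (hr₁ : r < 1) :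
    ENNReal.ofReal (r * (1 - r ^ 2) ^ 2 / 4 * (2 * π * ‖g 0‖ ^ 2)) ≤
      ∫⁻ θ in Ioo (-π) π, ENNReal.ofReal r *
        ENNReal.ofReal (‖g (circleMap 0 r θ)‖ ^ 2 / rho (circleMap 0 r θ)) := by
  have hr : 1 - r ^ 2 ≠ 0 := by nlinarith
  have hdisk : DifferentiableOn ℂ g (closedBall 0 |r|) :=
    hg.mono (closedBall_subset_ball (by rwa [abs_of_pos hr₀]))
  calc ENNReal.ofReal (r * (1 - r ^ 2) ^ 2 / 4 * (2 * π * ‖g 0‖ ^ 2))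
      = ENNReal.ofReal (r * (1 - r ^ 2) ^ 2 / 4) * ENNReal.ofReal (2 * π * ‖g 0‖ ^ 2) :=
        ENNReal.ofReal_mul (by positivity)
    _ ≤ ENNReal.ofReal (r * (1 - r ^ 2) ^ 2 / 4) *
          ∫⁻ θ in Ioo (-π) π, ENNReal.ofReal (‖g (circleMap 0 r θ)‖ ^ 2) := by
        gcongr
        exact ofReal_two_pi_mul_sq_norm_le_setLIntegral hdisk
    _ = ∫⁻ θ in Ioo (-π) π, ENNReal.ofReal r *
          ENNReal.ofReal (‖g (circleMap 0 r θ)‖ ^ 2 / rho (circleMap 0 r θ)) := by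
        rw [← lintegral_const_mul' _ _ ENNReal.ofReal_ne_top]
        refine lintegral_congr fun θ => ?_
        rw [rho, norm_circleMap_zero, abs_of_pos hr₀, ← ENNReal.ofReal_mul (by positivity),
          ← ENNReal.ofReal_mul hr₀.le]
        congr 1
        field_simp

lemma ofReal_sq_norm_zero_le_lintegral_sq_norm_div_rho {g : ℂ → ℂ}
    (hg : DifferentiableOn ℂ g (ball 0 1)) :
    ENNReal.ofReal (π / 12 * ‖g 0‖ ^ 2) ≤ ∫⁻ u in ball 0 1, ENNReal.ofReal (‖g u‖ ^ 2 / rho u) := by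
  have hcont : ContinuousOn (fun u => ENNReal.ofReal (‖g u‖ ^ 2 / rho u)) (ball 0 1) :=
    ENNReal.continuous_ofReal.comp_continuousOn ((hg.continuousOn.norm.pow 2).div continuousOn_rho
      fun u hu => (rho_pos (mem_ball_zero_iff.mp hu)).ne')
  calc ENNReal.ofReal (π / 12 * ‖g 0‖ ^ 2)
      = ENNReal.ofReal (∫ r in (0 : ℝ)..1, r * (1 - r ^ 2) ^ 2 / 4 * (2 * π * ‖g 0‖ ^ 2)) := by
        rw [intervalIntegral.integral_mul_const, integral_mul_one_sub_sq_sq_div_four]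
        ring_nf
    _ = ∫⁻ r in Ioo 0 1, ENNReal.ofReal (r * (1 - r ^ 2) ^ 2 / 4 * (2 * π * ‖g 0‖ ^ 2)) :=
        ofReal_intervalIntegral_eq_setLIntegral_Ioo zero_le_one (by fun_prop)
          fun r hr => by have := hr.1; positivity
    _ ≤ ∫⁻ r in Ioo 0 1, ∫⁻ θ in Ioo (-π) π, ENNReal.ofReal r *
          ENNReal.ofReal (‖g (circleMap 0 r θ)‖ ^ 2 / rho (circleMap 0 r θ)) :=
        setLIntegral_mono' measurableSet_Ioo fun r ⟨hr₀, hr₁⟩ =>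
          ofReal_weighted_sq_norm_le_lintegral_circle hg hr₀ hr₁
    _ ≤ _ := lintegral_polar_le_lintegral_ball hcont

lemma ofReal_sq_norm_le_lintegral_sq_norm_div_rho {q : ℂ → ℂ}
    (hq : DifferentiableOn ℂ q (ball 0 1)) {w : ℂ} (hw : ‖w‖ < 1) :
    ENNReal.ofReal (π / 12 * ((1 - ‖w‖ ^ 2) ^ 2 * ‖q w‖) ^ 2) ≤
      ∫⁻ z in ball 0 1, ENNReal.ofReal (‖q z‖ ^ 2 / rho z) := by
  calc ENNReal.ofReal (π / 12 * ((1 - ‖w‖ ^ 2) ^ 2 * ‖q w‖) ^ 2)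
      = ENNReal.ofReal (π / 12 * ‖diskMobiusPullback w q 0‖ ^ 2) := by
        rw [diskMobiusPullback_zero, norm_mul, Complex.norm_real,
          Real.norm_of_nonneg (by positivity)]
    _ ≤ ∫⁻ u in ball 0 1, ENNReal.ofReal (‖diskMobiusPullback w q u‖ ^ 2 / rho u) :=
        ofReal_sq_norm_zero_le_lintegral_sq_norm_div_rho (differentiableOn_diskMobiusPullback hw hq)
    _ = _ := (lintegral_sq_norm_div_rho_diskMobiusPullback hw q).symm

/-- Proposition 4.5 (Takhtajan–Teo, Teo): if `μ = ((1-|z|²)²/4) conj(q)` is a harmonic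
Beltrami differential on the unit disk (with `q` holomorphic) of finite Weil–Petersson
norm `‖μ‖_WP = (∫_𝔻 |μ|² dA)^{1/2}`, then `sup_{z ∈ 𝔻} |μ(z)| ≤ √(3/(4π)) ‖μ‖_WP`. -/
theorem harnack_sup_bound (q : ℂ → ℂ)
    (hq : DifferentiableOn ℂ q (Metric.ball (0 : ℂ) 1))
    (μ : ℂ → ℂ)
    (hμ : ∀ z, μ z = ((((1 - ‖z‖ ^ 2) ^ 2 / 4 : ℝ)) : ℂ) * (starRingEnd ℂ) (q z))
    (hint : IntegrableOn (fun z => ‖μ z‖ ^ 2 * rho z) (Metric.ball (0 : ℂ) 1)) :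
    ∀ z ∈ Metric.ball (0 : ℂ) 1,
      ‖μ z‖ ≤ Real.sqrt (3 / (4 * Real.pi)) *
        Real.sqrt (∫ z in Metric.ball (0 : ℂ) 1, ‖μ z‖ ^ 2 * rho z) := by
  intro w hw
  have hnorm_μ (z : ℂ) : ‖μ z‖ = (1 - ‖z‖ ^ 2) ^ 2 / 4 * ‖q z‖ := by
    rw [hμ, norm_mul, Complex.norm_real, RCLike.norm_conj, Real.norm_of_nonneg (by positivity)]
  have hμρ (z : ℂ) : ‖μ z‖ ^ 2 * rho z = ‖q z‖ ^ 2 / rho z := by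
    rw [hnorm_μ, rho]
    -- on the unit circle `rho z = 4 / 0 = 0`, and both sides vanish
    rcases eq_or_ne (1 - ‖z‖ ^ 2) 0 with h | h
    · simp [h]
    · field_simp
  have hnonneg : 0 ≤ᵐ[volume.restrict (ball 0 1)] fun z => ‖μ z‖ ^ 2 * rho z :=
    Filter.Eventually.of_forall fun z => mul_nonneg (sq_nonneg _) (rho_nonneg z)
  have hI : π / 12 * ((1 - ‖w‖ ^ 2) ^ 2 * ‖q w‖) ^ 2 ≤
      ∫ z in ball (0 : ℂ) 1, ‖μ z‖ ^ 2 * rho z := by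
    rw [← ENNReal.ofReal_le_ofReal_iff (integral_nonneg_of_ae hnonneg),
      ofReal_integral_eq_lintegral_ofReal hint hnonneg]
    simpa only [hμρ] using ofReal_sq_norm_le_lintegral_sq_norm_div_rho hq (mem_ball_zero_iff.mp hw)
  rw [← Real.sqrt_mul (by positivity)]
  refine Real.le_sqrt_of_sq_le ?_
  calc ‖μ w‖ ^ 2 = 3 / (4 * π) * (π / 12 * ((1 - ‖w‖ ^ 2) ^ 2 * ‖q w‖) ^ 2) := by
        rw [hnorm_μ]; field_simp; ring
    _ ≤ 3 / (4 * π) * ∫ z in ball (0 : ℂ) 1, ‖μ z‖ ^ 2 * rho z := by gcongr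
end

section
/- Let Φ : 𝔻 → ℂ be holomorphic and define f(z) = (1-|z|²)^4 |Φ(z)|² / 16 (that is, f = |Φ|²/ρ²). Then for every z ∈ 𝔻 the Euclidean Laplacian satisfies Δf(z) ≥ -16 f(z)/(1-|z|²)²; equivalently, Δ_ρ f ≥ -4 f on all of 𝔻, where Δ_ρ = ρ(z)^{-1}(∂²/∂x² + ∂²/∂y²). -/
/-!
Writing `(1 - |z|²)⁴ |Φ|² = ∑ₖ (-1)ᵏ C(4,k) |zᵏ Φ|²` expresses `f` as a real combination of squared
moduli of holomorphic functions, and `Δ|A|² = 4 |A'|²` for holomorphic `A`. Summing and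
simplifying gives the closed form
`Δf = (1 - |z|²)² (|4 z̄ Φ - (1 - |z|²) Φ'|² / 4 - |Φ|²)`,
whose first term is a nonnegative square.
-/

open Complex

/-- The Euclidean Laplacian `Δg = ∂²g/∂x² + ∂²g/∂y²` of `g : ℂ → ℝ`, written as the sum
of the second directional derivatives in the directions `1` and `I`. -/
noncomputable def lap (g : ℂ → ℝ) (p : ℂ) : ℝ :=
  fderiv ℝ (fun z => fderiv ℝ g z 1) p 1 +
    fderiv ℝ (fun z => fderiv ℝ g z Complex.I) p Complex.I

open InnerProductSpace Laplacian Topology ComplexConjugate Finset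

theorem lap_eq_laplacian {g : ℂ → ℝ} {p : ℂ} (hg : DifferentiableAt ℝ (fderiv ℝ g) p) :
    lap g p = Δ g p := by
  have hdir (v : ℂ) : fderiv ℝ (fun z => fderiv ℝ g z v) p v = fderiv ℝ (fderiv ℝ g) p v v := by
    simp [fderiv_clm_apply hg (differentiableAt_const v)]
  simp [lap, laplacian_eq_iteratedFDeriv_complexPlane, iteratedFDeriv_two_apply, hdir]

theorem ContDiffAt.lap_eq_laplacian {g : ℂ → ℝ} {p : ℂ} (hg : ContDiffAt ℝ 2 g p) :
    lap g p = Δ g p :=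
  _root_.lap_eq_laplacian ((hg.fderiv_right (m := 1) le_rfl).differentiableAt one_ne_zero)

theorem ContDiffAt.laplacian_sum {E F ι : Type*} [NormedAddCommGroup E] [InnerProductSpace ℝ E]
    [FiniteDimensional ℝ E] [NormedAddCommGroup F] [NormedSpace ℝ F]
    {g : ι → E → F} {p : E} {s : Finset ι} (hg : ∀ k ∈ s, ContDiffAt ℝ 2 (g k) p) :
    Δ (fun z => ∑ k ∈ s, g k z) p = ∑ k ∈ s, Δ (g k) p := by
  classical
  induction s using Finset.induction_on with
  | empty => simp
  | insert k s hks ih =>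
    simp only [sum_insert hks]
    rw [forall_mem_insert] at hg
    exact (hg.1.laplacian_add (ContDiffAt.sum hg.2)).trans (by rw [ih hg.2])

theorem fderiv_norm_sq_comp_apply {A : ℂ → ℂ} {z : ℂ} (hA : DifferentiableAt ℂ A z) (w : ℂ) :
    fderiv ℝ (fun y => ‖A y‖ ^ 2) z w = 2 * inner ℝ (A z) (deriv A z * w) := by
  rw [(hA.hasDerivAt.hasFDerivAt.restrictScalars ℝ).norm_sq.fderiv]
  simp only [FunLike.coe_smul, Pi.smul_apply, ContinuousLinearMap.comp_apply, innerSL_apply_apply,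
    ContinuousLinearMap.coe_restrictScalars', ContinuousLinearMap.toSpanSingleton_apply,
    smul_eq_mul, nsmul_eq_mul, Nat.cast_ofNat, mul_comm w]

theorem fderiv_fderiv_norm_sq_comp_apply {A : ℂ → ℂ} {p : ℂ} (hA : AnalyticAt ℂ A p) (v w : ℂ) :
    fderiv ℝ (fun z => fderiv ℝ (fun y => ‖A y‖ ^ 2) z w) p v =
      2 * (inner ℝ (deriv A p * v) (deriv A p * w) +
        inner ℝ (A p) (deriv (deriv A) p * v * w)) := by
  have hfirst : (fun z => fderiv ℝ (fun y => ‖A y‖ ^ 2) z w) =ᶠ[𝓝 p]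
      fun z => 2 * inner ℝ (A z) (deriv A z * w) := by
    filter_upwards [hA.eventually_analyticAt] with z hz
    exact fderiv_norm_sq_comp_apply hz.differentiableAt w
  have hA' := hA.differentiableAt.hasDerivAt.hasFDerivAt.restrictScalars ℝ
  have hA'' := (hA.deriv.differentiableAt.hasDerivAt.hasFDerivAt.restrictScalars ℝ).mul_const w
  rw [hfirst.fderiv_eq, ((hA'.inner ℝ hA'').const_mul 2).fderiv]
  simp only [FunLike.coe_smul, Pi.smul_apply, ContinuousLinearMap.comp_apply,
    ContinuousLinearMap.prod_apply, fderivInnerCLM_apply, ContinuousLinearMap.coe_restrictScalars',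
    ContinuousLinearMap.toSpanSingleton_apply, smul_eq_mul]
  ring_nf

theorem lap_norm_sq_comp {A : ℂ → ℂ} {p : ℂ} (hA : AnalyticAt ℂ A p) :
    lap (fun z => ‖A z‖ ^ 2) p = 4 * ‖deriv A p‖ ^ 2 := by
  have hII : deriv (deriv A) p * I * I = -deriv (deriv A) p := by
    rw [mul_assoc, I_mul_I, mul_neg_one]
  rw [lap, fderiv_fderiv_norm_sq_comp_apply hA, fderiv_fderiv_norm_sq_comp_apply hA]
  simp only [mul_one, hII, inner_neg_right, real_inner_self_eq_norm_sq, norm_mul, norm_I]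
  ring

theorem AnalyticAt.contDiffAt_norm_sq {A : ℂ → ℂ} {p : ℂ} (hA : AnalyticAt ℂ A p) :
    ContDiffAt ℝ 2 (fun z => ‖A z‖ ^ 2) p :=
  (contDiff_norm_sq ℝ).contDiffAt.comp p (hA.contDiffAt.restrict_scalars ℝ)

theorem lap_sum_mul_norm_sq {ι : Type*} {s : Finset ι} (c : ι → ℝ) {A : ι → ℂ → ℂ} {p : ℂ}
    (hA : ∀ k ∈ s, AnalyticAt ℂ (A k) p) :
    lap (fun z => ∑ k ∈ s, c k * ‖A k z‖ ^ 2) p = ∑ k ∈ s, c k * (4 * ‖deriv (A k) p‖ ^ 2) := by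
  have hg (k) (hk : k ∈ s) : ContDiffAt ℝ 2 (c k • fun z => ‖A k z‖ ^ 2) p :=
    (hA k hk).contDiffAt_norm_sq.const_smul (c k)
  refine (ContDiffAt.sum hg).lap_eq_laplacian.trans ?_
  rw [ContDiffAt.laplacian_sum hg]
  refine sum_congr rfl fun k hk => ?_
  rw [laplacian_smul _ (hA k hk).contDiffAt_norm_sq, ← (hA k hk).contDiffAt_norm_sq.lap_eq_laplacian,
    lap_norm_sq_comp (hA k hk), smul_eq_mul]

theorem one_sub_norm_sq_pow_mul_norm_sq (n : ℕ) (z a : ℂ) :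
    (1 - ‖z‖ ^ 2) ^ n * ‖a‖ ^ 2 = ∑ k ∈ range (n + 1), (-1) ^ k * n.choose k * ‖z ^ k * a‖ ^ 2 := by
  rw [sub_eq_neg_add, add_pow, sum_mul]
  refine sum_congr rfl fun k _ => ?_
  rw [norm_mul, norm_pow]
  ring

theorem deriv_pow_mul {Φ : ℂ → ℂ} {z : ℂ} (hΦ : DifferentiableAt ℂ Φ z) (k : ℕ) :
    deriv (fun y => y ^ k * Φ y) z = k * z ^ (k - 1) * Φ z + z ^ k * deriv Φ z := by
  rw [deriv_fun_mul (differentiableAt_pow k) hΦ, deriv_pow_field]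

theorem sum_range_five_choose_mul_norm_sq_eq (z a b : ℂ) :
    ∑ k ∈ range 5, (-1) ^ k * (Nat.choose 4 k : ℝ) / 16 *
        (4 * ‖k * z ^ (k - 1) * a + z ^ k * b‖ ^ 2) =
      (1 - ‖z‖ ^ 2) ^ 2 *
        (‖4 * conj z * a - ((1 - ‖z‖ ^ 2 : ℝ) : ℂ) * b‖ ^ 2 / 4 - ‖a‖ ^ 2) := by
  simp only [sum_range_succ, sum_range_zero]
  norm_num [Nat.choose]
  apply Complex.ofReal_injective
  push_cast
  simp only [← mul_conj', map_add, map_sub, map_mul, map_pow, map_ofNat, map_one, conj_conj]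
  ring

theorem lap_one_sub_norm_sq_pow_four_mul_norm_sq {Φ : ℂ → ℂ} {z : ℂ} (hΦ : AnalyticAt ℂ Φ z) :
    lap (fun z => (1 - ‖z‖ ^ 2) ^ 4 * ‖Φ z‖ ^ 2 / 16) z =
      (1 - ‖z‖ ^ 2) ^ 2 *
        (‖4 * conj z * Φ z - ((1 - ‖z‖ ^ 2 : ℝ) : ℂ) * deriv Φ z‖ ^ 2 / 4 - ‖Φ z‖ ^ 2) := by
  have hexpand : (fun z => (1 - ‖z‖ ^ 2) ^ 4 * ‖Φ z‖ ^ 2 / 16) =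
      fun z => ∑ k ∈ range 5, (-1) ^ k * (Nat.choose 4 k : ℝ) / 16 * ‖z ^ k * Φ z‖ ^ 2 := by
    funext y
    rw [one_sub_norm_sq_pow_mul_norm_sq, sum_div]
    exact sum_congr rfl fun k _ => by ring
  rw [hexpand, lap_sum_mul_norm_sq (A := fun k y => y ^ k * Φ y) _
    fun k _ => (analyticAt_id.pow k).mul hΦ]
  simp only [deriv_pow_mul hΦ.differentiableAt]
  exact sum_range_five_choose_mul_norm_sq_eq z (Φ z) (deriv Φ z)

/-- Lemma 5.1: if `Φ` is holomorphic on the unit disk and `f = |Φ|²/ρ²`, i.e.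
`f(z) = (1-|z|²)⁴ |Φ(z)|² / 16`, then `Δf ≥ -16 f/(1-|z|²)²` on all of `𝔻`;
equivalently `Δ_ρ f ≥ -4 f`. -/
theorem laplacian_sq_modulus_lower_bound (Φ : ℂ → ℂ)
    (hΦ : DifferentiableOn ℂ Φ (Metric.ball (0 : ℂ) 1)) :
    ∀ z ∈ Metric.ball (0 : ℂ) 1,
      lap (fun z => (1 - ‖z‖ ^ 2) ^ 4 * ‖Φ z‖ ^ 2 / 16) z ≥
        -16 * ((1 - ‖z‖ ^ 2) ^ 4 * ‖Φ z‖ ^ 2 / 16) / (1 - ‖z‖ ^ 2) ^ 2 := by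
  intro z hz
  have hs : 1 - ‖z‖ ^ 2 ≠ 0 := by
    have : ‖z‖ < 1 := mem_ball_zero_iff.1 hz
    nlinarith [norm_nonneg z]
  rw [lap_one_sub_norm_sq_pow_four_mul_norm_sq (hΦ.analyticAt (Metric.isOpen_ball.mem_nhds hz)),
    ge_iff_le]
  calc -16 * ((1 - ‖z‖ ^ 2) ^ 4 * ‖Φ z‖ ^ 2 / 16) / (1 - ‖z‖ ^ 2) ^ 2
      = (1 - ‖z‖ ^ 2) ^ 2 * (0 - ‖Φ z‖ ^ 2) := by field_simp; ring
    _ ≤ _ := by gcongr; positivity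
end
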